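/- (Parry's criterion, one direction.) Let β > 1 and let d*_β(1) be the quasi-greedy expansion of 1. If u = u_1 u_2 u_3 ⋯ is an infinite word over {0,...,⌈β⌉−1} that is the greedy β-expansion of some x ∈ [0,1), then for every m ≥ 0, the shifted word σ^m(u) = u_{m+1} u_{m+2} ⋯ is lexicographically strictly smaller than d*_β(1). -/

import Mathlib

/-- Strict lexicographic order on infinite words over ℕ. -/
def LexLT (a b : ℕ → ℕ) : Prop := ∃ p, (∀ i < p, a i = b i) ∧ a p < b p

/-- Non-strict lexicographic order. -/
def LexLE (a b : ℕ → ℕ) : Prop := a = b ∨ LexLT a b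

/-- `d` is the Rényi (quasi-greedy) expansion of 1 in base β. -/
def IsRenyiExpansionOfOne (β : ℝ) (d : ℕ → ℕ) : Prop :=
  (∀ i, d i ≤ ⌈β⌉₊ - 1) ∧
  HasSum (fun i : ℕ => (d i : ℝ) / β ^ (i + 1)) 1 ∧
  (∀ N, ∃ i ≥ N, d i ≠ 0) ∧
  ∀ d' : ℕ → ℕ, (∀ i, d' i ≤ ⌈β⌉₊ - 1) →
    HasSum (fun i : ℕ => (d' i : ℝ) / β ^ (i + 1)) 1 →
    (∀ N, ∃ i ≥ N, d' i ≠ 0) → LexLE d' d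

/-! Every tail `σⁿ d` has value at most `1`: at the first `n` where the value of `σⁿ d` exceeds `1`,
raising `d_{n-1}` by one and continuing with a quasi-greedy expansion of the excess would give an
expansion of `1` that does not end in `0^ω` and is lexicographically larger than `d`. Hence if
`σᵐ u ≥ d` lexicographically, comparing at the first difference shows that the value `Tᵐ x` of
`σᵐ u` is at least the value `1` of `d`, contradicting `Tᵐ x < 1`. -/

open Finset Filter Topology

theorem lexLE_of_not_lexLT {a b : ℕ → ℕ} (h : ¬ LexLT a b) : LexLE b a := by
  classical
  by_cases hab : b = a
  · exact Or.inl hab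
  have hne : ∃ n, b n ≠ a n := by
    by_contra! h'
    exact hab (funext h')
  have hagree : ∀ i < Nat.find hne, b i = a i := fun i hi => not_not.1 (Nat.find_min hne hi)
  rcases (Nat.find_spec hne).lt_or_gt with hlt | hgt
  · exact Or.inr ⟨_, hagree, hlt⟩
  · exact absurd ⟨_, fun i hi => (hagree i hi).symm, hgt⟩ h

theorem not_lexLE_of_lexLT {a b : ℕ → ℕ} (h : LexLT a b) : ¬ LexLE b a := by
  obtain ⟨p, hp, hlt⟩ := h
  rintro (rfl | ⟨q, hq, hlt'⟩)
  · exact hlt.false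
  · rcases lt_trichotomy p q with hpq | rfl | hqp
    · exact (hq p hpq ▸ hlt).false
    · exact (hlt.trans hlt').false
    · exact (hp q hqp ▸ hlt').false

section Expansion

variable {β : ℝ}

theorem sum_range_div_pow_add_eq_of_mul_eq_add (hβ : β ≠ 0) {a s : ℕ → ℝ}
    (h : ∀ n, β * s n = a n + s (n + 1)) (n : ℕ) :
    ∑ i ∈ range n, a i / β ^ (i + 1) + s n / β ^ n = s 0 := by
  induction n with
  | zero => simp
  | succ n ih =>
    have hs : s n = (a n + s (n + 1)) / β := by rw [← h n]; field_simp
    rw [← ih, sum_range_succ, add_assoc, hs, pow_succ]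
    field_simp

theorem hasSum_of_mul_eq_add (hβ : 1 < β) {a s : ℕ → ℝ} {B : ℝ} (ha : ∀ n, 0 ≤ a n)
    (hs : ∀ n, s n ∈ Set.Icc 0 B) (h : ∀ n, β * s n = a n + s (n + 1)) :
    HasSum (fun i => a i / β ^ (i + 1)) (s 0) := by
  have hβ0 : 0 < β := one_pos.trans hβ
  rw [hasSum_iff_tendsto_nat_of_nonneg (fun i => div_nonneg (ha i) (by positivity))]
  have hrem : Tendsto (fun n => s n / β ^ n) atTop (𝓝 0) := by
    have hgeom : Tendsto (fun n => B * β⁻¹ ^ n) atTop (𝓝 0) := by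
      simpa using (tendsto_pow_atTop_nhds_zero_of_lt_one (by positivity)
        (inv_lt_one_of_one_lt₀ hβ)).const_mul B
    refine squeeze_zero (fun n => div_nonneg (hs n).1 (by positivity)) (fun n => ?_) hgeom
    rw [inv_pow, ← div_eq_mul_inv]
    exact div_le_div_of_nonneg_right (hs n).2 (by positivity)
  have := (tendsto_const_nhds (x := s 0)).sub hrem
  rw [sub_zero] at this
  exact this.congr fun n => by
    rw [← sum_range_div_pow_add_eq_of_mul_eq_add hβ0.ne' h n, add_sub_cancel_right]

theorem hasSum_div_pow_succ (hβ : 1 < β) {C : ℝ} (hC : 0 ≤ C) :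
    HasSum (fun i : ℕ => C / β ^ (i + 1)) (C / (β - 1)) := by
  have hβ1 : 0 < β - 1 := sub_pos.2 hβ
  refine hasSum_of_mul_eq_add (s := fun _ => C / (β - 1)) hβ (fun _ => hC)
    (fun _ => ⟨by positivity, le_rfl⟩) fun _ => ?_
  field_simp
  ring

noncomputable def tailValue (β : ℝ) (a : ℕ → ℕ) (n : ℕ) : ℝ :=
  ∑' i, (a (n + i) : ℝ) / β ^ (i + 1)

section TailValue

variable {C : ℕ} {a : ℕ → ℕ}

theorem hasSum_tailValue (hβ : 1 < β) (haC : ∀ i, a i ≤ C) (n : ℕ) :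
    HasSum (fun i => (a (n + i) : ℝ) / β ^ (i + 1)) (tailValue β a n) := by
  refine (Summable.of_nonneg_of_le (fun i => by positivity) (fun i => ?_)
    (hasSum_div_pow_succ hβ C.cast_nonneg).summable).hasSum
  gcongr
  exact_mod_cast haC (n + i)

theorem tailValue_le (hβ : 1 < β) (haC : ∀ i, a i ≤ C) (n : ℕ) :
    tailValue β a n ≤ C / (β - 1) := by
  refine hasSum_le (fun i => ?_) (hasSum_tailValue hβ haC n)
    (hasSum_div_pow_succ hβ C.cast_nonneg)
  gcongr
  exact_mod_cast haC (n + i)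

theorem mul_tailValue (hβ : 1 < β) (haC : ∀ i, a i ≤ C) (n : ℕ) :
    β * tailValue β a n = a n + tailValue β a (n + 1) := by
  have h := (hasSum_nat_add_iff' 1).2 (hasSum_tailValue hβ haC n)
  simp only [sum_range_one, add_zero, zero_add, pow_one] at h
  have h' := (hasSum_tailValue hβ haC (n + 1)).div_const β
  have hsplit : tailValue β a n - a n / β = tailValue β a (n + 1) / β := by
    refine h.unique (h'.congr_fun fun i => ?_)
    rw [add_assoc n, add_comm 1 i, pow_succ, div_div]
  rw [sub_eq_iff_eq_add] at hsplit
  rw [hsplit]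
  field_simp
  ring

theorem sum_range_add_tailValue (hβ : 1 < β) (haC : ∀ i, a i ≤ C) (n : ℕ) :
    ∑ i ∈ range n, (a i : ℝ) / β ^ (i + 1) + tailValue β a n / β ^ n = tailValue β a 0 :=
  sum_range_div_pow_add_eq_of_mul_eq_add (one_pos.trans hβ).ne' (mul_tailValue hβ haC) n

theorem HasSum.tailValue_zero {v : ℝ} (hβ : 1 < β) (haC : ∀ i, a i ≤ C)
    (ha : HasSum (fun i => (a i : ℝ) / β ^ (i + 1)) v) : tailValue β a 0 = v :=
  (hasSum_tailValue hβ haC 0).unique (by simpa using ha)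

theorem tailValue_zero_le_of_lexLE (hβ : 1 < β) {b : ℕ → ℕ} (hbC : ∀ i, b i ≤ C)
    (hb : ∀ n, tailValue β b n ≤ 1) {v : ℝ} (ha : HasSum (fun i => (a i : ℝ) / β ^ (i + 1)) v)
    (hba : LexLE b a) : tailValue β b 0 ≤ v := by
  rcases hba with rfl | ⟨p, hp, hlt⟩
  · exact (ha.tailValue_zero hβ hbC).le
  calc tailValue β b 0
      = ∑ i ∈ range p, (b i : ℝ) / β ^ (i + 1) + b p / β ^ (p + 1)
          + tailValue β b (p + 1) / β ^ (p + 1) := by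
        rw [← sum_range_add_tailValue hβ hbC (p + 1), sum_range_succ]
    _ ≤ ∑ i ∈ range p, (b i : ℝ) / β ^ (i + 1) + b p / β ^ (p + 1) + 1 / β ^ (p + 1) := by
        gcongr
        exact hb _
    _ ≤ ∑ i ∈ range (p + 1), (a i : ℝ) / β ^ (i + 1) := by
        rw [sum_range_succ, add_assoc, ← add_div,
          sum_congr rfl fun i hi => by rw [hp i (mem_range.1 hi)]]
        gcongr
        exact_mod_cast hlt
    _ ≤ v := sum_le_hasSum _ (fun i _ => by positivity) ha

end TailValue

section QuasiGreedy

variable {C : ℕ}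

noncomputable def quasiGreedyDigit (β : ℝ) (C : ℕ) (z : ℝ) : ℕ := min C (⌈β * z⌉₊ - 1)

noncomputable def quasiGreedyMap (β : ℝ) (C : ℕ) (z : ℝ) : ℝ := β * z - quasiGreedyDigit β C z

theorem mapsTo_quasiGreedyMap (hβ : 1 < β) (hC : β ≤ C + 1) :
    Set.MapsTo (quasiGreedyMap β C) (Set.Ioc 0 (C / (β - 1))) (Set.Ioc 0 (C / (β - 1))) := by
  rintro z ⟨hz0, hzM⟩
  have hβ1 : 0 < β - 1 := sub_pos.2 hβ
  have hβz : 0 < β * z := by positivity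
  have hceil : ((⌈β * z⌉₊ - 1 : ℕ) : ℝ) = ⌈β * z⌉₊ - 1 := by
    rw [Nat.cast_sub (Nat.one_le_ceil_iff.2 hβz), Nat.cast_one]
  have hlt : ((⌈β * z⌉₊ - 1 : ℕ) : ℝ) < β * z := by
    rw [hceil]
    linarith [Nat.ceil_lt_add_one hβz.le]
  have hdigit : (quasiGreedyDigit β C z : ℝ) ≤ ((⌈β * z⌉₊ - 1 : ℕ) : ℝ) :=
    Nat.cast_le.2 (min_le_right _ _)
  have hM : 1 ≤ (C : ℝ) / (β - 1) := by
    rw [le_div_iff₀ hβ1]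
    linarith
  refine ⟨by unfold quasiGreedyMap; linarith, ?_⟩
  unfold quasiGreedyMap quasiGreedyDigit
  rcases le_total C (⌈β * z⌉₊ - 1) with h | h
  · rw [min_eq_left h]
    have hfix : β * (C / (β - 1)) - C = C / (β - 1) := by
      field_simp
      ring
    nlinarith
  · rw [min_eq_right h, hceil]
    linarith [Nat.le_ceil (β * z)]

theorem exists_hasSum_of_mem_Ioc (hβ : 1 < β) (hC : β ≤ C + 1) {y : ℝ}
    (hy : y ∈ Set.Ioc 0 (C / (β - 1))) :
    ∃ e : ℕ → ℕ, (∀ j, e j ≤ C) ∧ HasSum (fun j => (e j : ℝ) / β ^ (j + 1)) y ∧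
      ∀ N, ∃ j ≥ N, e j ≠ 0 := by
  set Y : ℕ → ℝ := fun j => (quasiGreedyMap β C)^[j] y
  have hY : ∀ j, Y j ∈ Set.Icc 0 (C / (β - 1)) := fun j =>
    Set.Ioc_subset_Icc_self ((mapsTo_quasiGreedyMap hβ hC).iterate j hy)
  have hrec : ∀ j, β * Y j = quasiGreedyDigit β C (Y j) + Y (j + 1) := fun j => by
    simp only [Y, Function.iterate_succ_apply', quasiGreedyMap]
    ring
  refine ⟨fun j => quasiGreedyDigit β C (Y j), fun j => min_le_left _ _,
    hasSum_of_mul_eq_add hβ (fun _ => Nat.cast_nonneg _) hY hrec, fun N => ?_⟩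
  by_contra! hzero
  have hYN := hasSum_of_mul_eq_add (s := fun j => Y (N + j)) hβ (fun _ => Nat.cast_nonneg _)
    (fun j => hY (N + j)) (fun j => hrec (N + j))
  simp only [hzero _ (Nat.le_add_right N _), Nat.cast_zero, zero_div, add_zero] at hYN
  exact ((mapsTo_quasiGreedyMap hβ hC).iterate N hy).1.ne (hasSum_zero.unique hYN)

end QuasiGreedy

theorem exists_lexLT_of_one_lt_tailValue (hβ : 1 < β) {C : ℕ} (hC : β ≤ C + 1) {d : ℕ → ℕ}
    (hdC : ∀ i, d i ≤ C) {k : ℕ} (hk : d k + 1 ≤ C) (hS : 1 < tailValue β d (k + 1)) :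
    ∃ d' : ℕ → ℕ, (∀ i, d' i ≤ C) ∧
      HasSum (fun i => (d' i : ℝ) / β ^ (i + 1)) (tailValue β d 0) ∧
      (∀ N, ∃ i ≥ N, d' i ≠ 0) ∧ LexLT d d' := by
  obtain ⟨e, heC, he, he_inf⟩ := exists_hasSum_of_mem_Ioc hβ hC
    (y := tailValue β d (k + 1) - 1) ⟨by linarith, by linarith [tailValue_le hβ hdC (k + 1)]⟩
  -- `d₀ ⋯ d_{k-1} (d_k + 1) e₀ e₁ ⋯` has the same value as `d`
  set d' : ℕ → ℕ := fun i => if i < k then d i else if i = k then d k + 1 else e (i - (k + 1))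
  have hd'_lt : ∀ i < k, d' i = d i := fun i hi => if_pos hi
  have hd'_k : d' k = d k + 1 := by simp [d']
  have hd'_e : ∀ j, d' (j + (k + 1)) = e j := fun j => by
    simp only [d', if_neg (show ¬ j + (k + 1) < k by omega),
      if_neg (show j + (k + 1) ≠ k by omega), Nat.add_sub_cancel]
  refine ⟨d', fun i => ?_, (hasSum_nat_add_iff' (k + 1)).1 ?_, fun N => ?_,
    ⟨k, fun i hi => (hd'_lt i hi).symm, by omega⟩⟩
  · simp only [d']
    split_ifs
    exacts [hdC i, hk, heC _]
  · have hval : (tailValue β d (k + 1) - 1) / β ^ (k + 1) =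
        tailValue β d 0 - ∑ i ∈ range (k + 1), (d' i : ℝ) / β ^ (i + 1) := by
      rw [← sum_range_add_tailValue hβ hdC (k + 1), sum_range_succ, sum_range_succ, hd'_k,
        sum_congr rfl fun i hi => by rw [← hd'_lt i (mem_range.1 hi)]]
      push_cast
      ring
    refine hval ▸ (he.div_const (β ^ (k + 1))).congr_fun fun j => ?_
    rw [hd'_e, div_div, ← pow_add, add_right_comm]
  · obtain ⟨j, hjN, hj⟩ := he_inf N
    exact ⟨j + (k + 1), by omega, by rwa [hd'_e]⟩

theorem IsRenyiExpansionOfOne.tailValue_le_one (hβ : 1 < β) {d : ℕ → ℕ}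
    (hd : IsRenyiExpansionOfOne β d) (n : ℕ) : tailValue β d n ≤ 1 := by
  obtain ⟨hdC, hd1, -, hmax⟩ := hd
  have hC : β ≤ ((⌈β⌉₊ - 1 : ℕ) : ℝ) + 1 := by
    rw [Nat.cast_sub (Nat.one_le_ceil_iff.2 (one_pos.trans hβ)), Nat.cast_one, sub_add_cancel]
    exact Nat.le_ceil β
  induction n with
  | zero => exact (hd1.tailValue_zero hβ hdC).le
  | succ k ih =>
    by_contra! hk
    have hdk : d k + 1 ≤ ⌈β⌉₊ - 1 := by
      have : (d k : ℝ) + 1 < ⌈β⌉₊ := by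
        nlinarith [mul_tailValue hβ hdC k, Nat.le_ceil β]
      have : d k + 1 < ⌈β⌉₊ := by exact_mod_cast this
      omega
    obtain ⟨d', hd'C, hd', hd'_inf, hlt⟩ := exists_lexLT_of_one_lt_tailValue hβ hC hdC hdk hk
    rw [hd1.tailValue_zero hβ hdC] at hd'
    exact not_lexLE_of_lexLT hlt (hmax d' hd'C hd' hd'_inf)

end Expansion

/-- Parry's criterion, one direction: if u is the greedy
β-expansion of some x ∈ [0,1), produced by the β-transformation T(x) = βx - ⌊βx⌋
with digits u_m = ⌊β T^m(x)⌋, then every shift of u is lexicographically strictly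
smaller than d*_β(1). -/
theorem stmt12 (β : ℝ) (hβ : 1 < β) (d : ℕ → ℕ) (hd : IsRenyiExpansionOfOne β d)
    (x : ℝ) (hx0 : 0 ≤ x) (hx1 : x < 1)
    (u : ℕ → ℕ) (t : ℕ → ℝ) (ht0 : t 0 = x)
    (hu : ∀ m, (u m : ℤ) = ⌊β * t m⌋)
    (ht : ∀ m, t (m + 1) = β * t m - ⌊β * t m⌋) :
    ∀ m, LexLT (fun i => u (m + i)) d := by
  have horbit : ∀ n, t n ∈ Set.Ico 0 1 := by
    rintro (_ | n)
    · exact ht0 ▸ ⟨hx0, hx1⟩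
    · rw [ht, ← Int.fract]
      exact ⟨Int.fract_nonneg _, Int.fract_lt_one _⟩
  have hrec : ∀ n, β * t n = u n + t (n + 1) := fun n => by
    rw [ht, ← Int.cast_natCast, hu]
    ring
  intro m
  by_contra hlex
  have hval : HasSum (fun i => (u (m + i) : ℝ) / β ^ (i + 1)) (t m) :=
    hasSum_of_mul_eq_add (s := fun i => t (m + i)) hβ (fun _ => Nat.cast_nonneg _)
      (fun _ => Set.Ico_subset_Icc_self (horbit _)) (fun _ => hrec _)
  have hle := tailValue_zero_le_of_lexLE hβ hd.1 (hd.tailValue_le_one hβ) hval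
    (lexLE_of_not_lexLT hlex)
  rw [hd.2.1.tailValue_zero hβ hd.1] at hle
  exact (horbit m).2.not_ge hle
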